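/- arXiv:1911.06588 — 3 statements merged into one kernel-verified Lean document; each statement's English description precedes it below -/
import Mathlib

section
/- Let A be a finite group acting by automorphisms on a finite group G such that the action of A on G is good. Then for every subgroup B of A and every B-invariant subgroup H of G, the equality [H,B,B] = [H,B] holds (i.e., [[H,B],B] = [H,B]). -/
/-!
By goodness every `h ∈ H` factors as `h = k * c` with `k ∈ [H,B]` and `c ∈ C_H(B)`. Since `c` is
fixed by `B`, the commutator of `h` with `b ∈ B` equals that of the conjugate `c⁻¹ * k * c`,
which lies in `[H,B]` because `H` normalizes `[H,B]`. Hence `[H,B] ≤ [H,B,B]`; the reverse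
inclusion is monotonicity together with `[H,B] ≤ H`.
-/

open scoped Pointwise

section GoodActionDefs

variable {A G : Type*}

/-- The subgroup `[H,B]` generated by commutators `h⁻¹ · (b • h)` with `h ∈ H`, `b ∈ B`,
for an action `φ : A →* MulAut G`. -/
def actCommutator [Group A] [Group G] (φ : A →* MulAut G) (H : Subgroup G) (B : Subgroup A) :
    Subgroup G :=
  Subgroup.closure {x | ∃ h ∈ H, ∃ b ∈ B, x = h⁻¹ * φ b h}

/-- The subgroup `C_G(B)` of elements of `G` fixed by every element of `B`. -/
def actFixed [Group A] [Group G] (φ : A →* MulAut G) (B : Subgroup A) : Subgroup G where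
  carrier := {g | ∀ b ∈ B, φ b g = g}
  one_mem' := fun b _ => map_one (φ b)
  mul_mem' := fun hx hy b hb => by rw [map_mul, hx b hb, hy b hb]
  inv_mem' := fun hx b hb => by rw [map_inv, hx b hb]

/-- `C_H(B) = H ⊓ C_G(B)`. -/
def actCentralizerIn [Group A] [Group G] (φ : A →* MulAut G) (H : Subgroup G) (B : Subgroup A) :
    Subgroup G :=
  H ⊓ actFixed φ B

/-- `H` is a `B`-invariant subgroup of `G`. -/
def ActInvariant [Group A] [Group G] (φ : A →* MulAut G) (B : Subgroup A) (H : Subgroup G) : Prop :=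
  ∀ b ∈ B, ∀ h ∈ H, φ b h ∈ H

/-- The action of `A` on `G` given by `φ` is *good* if `H = [H,B]·C_H(B)` for every subgroup
`B` of `A` and every `B`-invariant subgroup `H` of `G`. -/
def IsGoodAction [Group A] [Group G] (φ : A →* MulAut G) : Prop :=
  ∀ (B : Subgroup A) (H : Subgroup G), ActInvariant φ B H →
    (H : Set G) = (actCommutator φ H B : Set G) * (actCentralizerIn φ H B : Set G)

end GoodActionDefs

section ActCommutator

variable {A G : Type*} [Group A] [Group G] (φ : A →* MulAut G)

theorem mem_actCommutator {H : Subgroup G} {B : Subgroup A} {h : G} (hh : h ∈ H) {b : A}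
    (hb : b ∈ B) : h⁻¹ * φ b h ∈ actCommutator φ H B :=
  Subgroup.subset_closure ⟨h, hh, b, hb, rfl⟩

theorem actCommutator_mono {H H' : Subgroup G} (hle : H ≤ H') (B : Subgroup A) :
    actCommutator φ H B ≤ actCommutator φ H' B := by
  refine (Subgroup.closure_le _).2 ?_
  rintro _ ⟨h, hh, b, hb, rfl⟩
  exact mem_actCommutator φ (hle hh) hb

theorem actCommutator_le {B : Subgroup A} {H : Subgroup G} (hH : ActInvariant φ B H) :
    actCommutator φ H B ≤ H := by
  refine (Subgroup.closure_le H).2 ?_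
  rintro _ ⟨h, hh, b, hb, rfl⟩
  exact H.mul_mem (H.inv_mem hh) (hH b hb h hh)

theorem conj_mem_actCommutator {H : Subgroup G} {B : Subgroup A} {c : G} (hc : c ∈ H) {k : G}
    (hk : k ∈ actCommutator φ H B) : c⁻¹ * k * c ∈ actCommutator φ H B := by
  suffices actCommutator φ H B ≤ (actCommutator φ H B).comap (MulAut.conj c⁻¹).toMonoidHom by
    simpa using this hk
  refine (Subgroup.closure_le _).2 ?_
  rintro _ ⟨h, hh, b, hb, rfl⟩
  have hconj : c⁻¹ * (h⁻¹ * φ b h) * c = ((h * c)⁻¹ * φ b (h * c)) * (c⁻¹ * φ b c)⁻¹ := by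
    simp only [map_mul, mul_inv_rev, inv_inv]
    group
  simpa [hconj] using (actCommutator φ H B).mul_mem (mem_actCommutator φ (H.mul_mem hh hc) hb)
    ((actCommutator φ H B).inv_mem (mem_actCommutator φ hc hb))

end ActCommutator

theorem good_action_commutator_idempotent_general {A G : Type*} [Group A] [Group G]
    (φ : A →* MulAut G) (hgood : IsGoodAction φ)
    (B : Subgroup A) (H : Subgroup G) (hH : ActInvariant φ B H) :
    actCommutator φ (actCommutator φ H B) B = actCommutator φ H B := by
  refine le_antisymm (actCommutator_mono φ (actCommutator_le φ hH) B) ?_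
  refine (Subgroup.closure_le _).2 ?_
  rintro _ ⟨h, hh, b, hb, rfl⟩
  obtain ⟨k, hk, c, ⟨hcH, hcfix⟩, rfl⟩ : h ∈ (actCommutator φ H B : Set G) *
      (actCentralizerIn φ H B : Set G) := hgood B H hH ▸ hh
  have hcomm : (k * c)⁻¹ * φ b (k * c) = (c⁻¹ * k * c)⁻¹ * φ b (c⁻¹ * k * c) := by
    simp only [map_mul, map_inv, hcfix b hb, mul_inv_rev, inv_inv]
    group
  rw [hcomm]
  exact mem_actCommutator φ (conj_mem_actCommutator φ hcH hk) hb

/-- If a finite group `A` acts by automorphisms on a finite group `G` and the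
action is good, then `[H,B,B] = [H,B]` for every subgroup `B` of `A` and every `B`-invariant
subgroup `H` of `G`. -/
theorem good_action_commutator_idempotent {A G : Type*} [Group A] [Group G] [Finite A] [Finite G]
    (φ : A →* MulAut G) (hgood : IsGoodAction φ)
    (B : Subgroup A) (H : Subgroup G) (hH : ActInvariant φ B H) :
    actCommutator φ (actCommutator φ H B) B = actCommutator φ H B :=
  good_action_commutator_idempotent_general φ hgood B H hH
end

section
/- Let A be a finite group acting by automorphisms on a finite group G such that the action of A on G is good, let B be a subgroup of A, let N be a normal B-invariant subgroup of G, and let H be a B-invariant subgroup of G containing N. Then the fixed points of B on the quotient H/N equal the image of the fixed points: C_{H/N}(B) = C_H(B)N/N. -/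
open scoped Pointwise

/-!
The preimage `K` in `H` of `C_{H/N}(B)` is `B`-invariant and satisfies `[K,B] ≤ N`, so goodness
of the action applied to `K` gives `K = [K,B]·C_K(B) ⊆ N·C_H(B)`. The reverse inclusion holds
because `B` fixes `C_H(B)` pointwise and maps `N` into itself.
-/

section GoodAction

variable {A G : Type*} [Group A] [Group G] {φ : A →* MulAut G} {B : Subgroup A}

/-- The preimage in `G` of `C_{G/N}(B)`. -/
def actFixedMod (φ : A →* MulAut G) (B : Subgroup A) (N : Subgroup G) [N.Normal] :
    Subgroup G where
  carrier := {g | ∀ b ∈ B, (QuotientGroup.mk (φ b g) : G ⧸ N) = QuotientGroup.mk g}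
  one_mem' b _ := by rw [map_one]
  mul_mem' hx hy b hb := by
    rw [map_mul, QuotientGroup.mk_mul, QuotientGroup.mk_mul, hx b hb, hy b hb]
  inv_mem' hx b hb := by rw [map_inv, QuotientGroup.mk_inv, QuotientGroup.mk_inv, hx b hb]

theorem mem_actFixedMod {N : Subgroup G} [N.Normal] {g : G} :
    g ∈ actFixedMod φ B N ↔
      ∀ b ∈ B, (QuotientGroup.mk (φ b g) : G ⧸ N) = QuotientGroup.mk g :=
  Iff.rfl

theorem actFixed_le_actFixedMod (N : Subgroup G) [N.Normal] :
    actFixed φ B ≤ actFixedMod φ B N :=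
  fun _ hg b hb => congrArg _ (hg b hb)

namespace ActInvariant

theorem inf {H K : Subgroup G} (hH : ActInvariant φ B H) (hK : ActInvariant φ B K) :
    ActInvariant φ B (H ⊓ K) :=
  fun b hb _ hg => ⟨hH b hb _ hg.1, hK b hb _ hg.2⟩

variable {N : Subgroup G}

theorem mk_apply_eq_of_mk_eq (hN : ActInvariant φ B N) {b : A} (hb : b ∈ B) {x y : G}
    (hxy : (QuotientGroup.mk x : G ⧸ N) = QuotientGroup.mk y) :
    (QuotientGroup.mk (φ b x) : G ⧸ N) = QuotientGroup.mk (φ b y) := by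
  rw [QuotientGroup.eq] at hxy ⊢
  simpa only [map_mul, map_inv] using hN b hb _ hxy

theorem le_actFixedMod [N.Normal] (hN : ActInvariant φ B N) : N ≤ actFixedMod φ B N := by
  intro n hn b hb
  rw [(QuotientGroup.eq_one_iff n).mpr hn, QuotientGroup.eq_one_iff]
  exact hN b hb n hn

theorem actFixedMod [N.Normal] (hN : ActInvariant φ B N) :
    ActInvariant φ B (actFixedMod φ B N) := by
  intro b hb g hg b' hb'
  have hconj : φ b' (φ b g) = φ b (φ (b⁻¹ * b' * b) g) := by
    simp only [map_mul, map_inv, MulAut.mul_apply, MulAut.inv_apply, MulEquiv.apply_symm_apply]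
  rw [hconj]
  exact hN.mk_apply_eq_of_mk_eq hb (hg _ (B.mul_mem (B.mul_mem (B.inv_mem hb) hb') hb))

end ActInvariant

theorem actCommutator_le_of_le_actFixedMod {N K : Subgroup G} [N.Normal]
    (hK : K ≤ actFixedMod φ B N) : actCommutator φ K B ≤ N := by
  refine (Subgroup.closure_le N).mpr ?_
  rintro _ ⟨k, hk, b, hb, rfl⟩
  exact QuotientGroup.eq.mp (hK hk b hb).symm

theorem IsGoodAction.exists_eq_mul_of_actCommutator_le (hgood : IsGoodAction φ)
    {K N : Subgroup G} [N.Normal] (hK : ActInvariant φ B K) (hKN : actCommutator φ K B ≤ N)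
    {g : G} (hg : g ∈ K) : ∃ c ∈ actCentralizerIn φ K B, ∃ n ∈ N, g = c * n := by
  have hg' : g ∈ (actCommutator φ K B : Set G) * (actCentralizerIn φ K B : Set G) := by
    rw [← hgood B K hK]
    exact hg
  obtain ⟨u, hu, c, hc, rfl⟩ := hg'
  refine ⟨c, hc, c⁻¹ * u * c, ?_, by group⟩
  simpa using Subgroup.Normal.conj_mem ‹N.Normal› u (hKN hu) c⁻¹

end GoodAction

theorem good_action_fixed_points_quotient_general {A G : Type*} [Group A] [Group G]
    (φ : A →* MulAut G) (hgood : IsGoodAction φ)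
    (B : Subgroup A) (N : Subgroup G) [N.Normal] (hN : ActInvariant φ B N)
    (H : Subgroup G) (hH : ActInvariant φ B H) :
    ∀ h ∈ H,
      ((∀ b ∈ B, (QuotientGroup.mk (φ b h) : G ⧸ N) = QuotientGroup.mk h) ↔
        ∃ c ∈ actCentralizerIn φ H B, ∃ n ∈ N, h = c * n) := by
  intro h hh
  constructor
  · intro hfix
    obtain ⟨c, hc, n, hn, rfl⟩ :=
      hgood.exists_eq_mul_of_actCommutator_le (hH.inf hN.actFixedMod)
        (actCommutator_le_of_le_actFixedMod inf_le_right) (show h ∈ H ⊓ _ from ⟨hh, hfix⟩)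
    exact ⟨c, ⟨hc.1.1, hc.2⟩, n, hn, rfl⟩
  · rintro ⟨c, hc, n, hn, rfl⟩
    exact mem_actFixedMod.mp <|
      Subgroup.mul_mem _ (actFixed_le_actFixedMod N hc.2) (hN.le_actFixedMod hn)

/-- If a finite group `A` acts by automorphisms on a finite group `G` and the
action is good, `B ≤ A`, `N` is a normal `B`-invariant subgroup of `G` and `H` is a
`B`-invariant subgroup of `G` containing `N`, then `C_{H/N}(B) = C_H(B)N/N`: a coset
`hN ∈ H/N` is fixed by `B` (under the induced action) iff `h ∈ C_H(B)·N`. -/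
theorem good_action_fixed_points_quotient {A G : Type*} [Group A] [Group G] [Finite A] [Finite G]
    (φ : A →* MulAut G) (hgood : IsGoodAction φ)
    (B : Subgroup A) (N : Subgroup G) [N.Normal] (hN : ActInvariant φ B N)
    (H : Subgroup G) (hNH : N ≤ H) (hH : ActInvariant φ B H) :
    ∀ h ∈ H,
      ((∀ b ∈ B, (QuotientGroup.mk (φ b h) : G ⧸ N) = QuotientGroup.mk h) ↔
        ∃ c ∈ actCentralizerIn φ H B, ∃ n ∈ N, h = c * n) :=
  good_action_fixed_points_quotient_general φ hgood B N hN H hH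
end

section
/- Let G and A be finite solvable groups, with A acting on G by automorphisms, and form the semidirect product GA. If gcd(|[G,A]|, |GA/[G,A]|) = 1, then the action of A on G is good. -/
open scoped Pointwise

/-!
Put `N = [H,B]`: it is normal and `B`-invariant in `H`, `B` acts trivially on `H/N`, and `|N|` is
prime to `|B|`, since `|B|` divides `|A|`, which divides `|GA : [G,A]|`. Then `H = N·C_H(B)` says
that every coset `xN` stable under `B` contains a `B`-fixed point. For abelian `N` this is the
vanishing of `H¹(B, N)` in coprime orders: average the cocycle `d ↦ x⁻¹·(d•x)` over `B` and take
a `|B|`-th root. For solvable `N`, lift first through the abelian quotient `N/[N,N]` and then, by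
induction, through `[N,N]`.
-/

theorem Subgroup.commutator_lt_self_of_isSolvable {G : Type*} [Group G] {N : Subgroup G}
    [Group.IsSolvable N] (hN : N ≠ ⊥) : ⁅N, N⁆ < N := by
  have : Nontrivial N := N.nontrivial_iff_ne_bot.mpr hN
  have h := (Subgroup.map_lt_map_iff_of_injective N.subtype_injective).mpr
    (Group.IsSolvable.commutator_lt_top_of_nontrivial N)
  rwa [_root_.commutator_def, Subgroup.map_commutator, ← MonoidHom.range_eq_map,
    N.range_subtype] at h

namespace groupCohomology

theorem isMulCoboundary₁_of_isMulCocycle₁_of_coprime {Δ M : Type*} [Group Δ] [Finite Δ]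
    [CommGroup M] [MulDistribMulAction Δ M] (hcop : (Nat.card M).Coprime (Nat.card Δ))
    {f : Δ → M} (hf : IsMulCocycle₁ f) : IsMulCoboundary₁ f := by
  have := Fintype.ofFinite Δ
  set P := ∏ e, f e
  have hP (d : Δ) : d • P = (f d)⁻¹ ^ Nat.card Δ * P :=
    calc d • P = ∏ e, d • f e := Finset.smul_prod'
      _ = ∏ e, (f d)⁻¹ * f (d * e) := Finset.prod_congr rfl fun e _ => by
        rw [hf, mul_comm, mul_inv_cancel_right]
      _ = (f d)⁻¹ ^ Nat.card Δ * P := by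
        rw [Finset.prod_mul_distrib, Finset.prod_const, Finset.card_univ, Nat.card_eq_fintype_card]
        exact congrArg _ (Equiv.prod_comp (Equiv.mulLeft d) f)
  set u := (powCoprime hcop).symm P
  have hu : u ^ Nat.card Δ = P := (powCoprime hcop).apply_symm_apply P
  refine ⟨u⁻¹, fun d => ?_⟩
  have hdu : d • u = (f d)⁻¹ * u := (powCoprime hcop).injective <| by
    simp only [powCoprime_apply, ← smul_pow', hu, hP, mul_pow]
  rw [smul_inv', hdu, div_inv_eq_mul, mul_inv_rev, inv_inv, mul_comm, mul_inv_cancel_left]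

end groupCohomology

section Action

variable {Δ Γ : Type*} [Group Δ] [Group Γ] (ψ : Δ →* MulAut Γ)

theorem map_eq_self_of_forall_mem {N : Subgroup Γ} (hN : ∀ d, ∀ g ∈ N, ψ d g ∈ N) (d : Δ) :
    N.map (ψ d).toMonoidHom = N := by
  refine le_antisymm (Subgroup.map_le_iff_le_comap.mpr fun g hg => hN d g hg) fun g hg => ?_
  exact ⟨ψ d⁻¹ g, hN d⁻¹ g hg, by simp⟩

theorem forall_apply_mem_commutator {N : Subgroup Γ} (hN : ∀ d, ∀ g ∈ N, ψ d g ∈ N) :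
    ∀ d, ∀ g ∈ ⁅N, N⁆, ψ d g ∈ ⁅N, N⁆ := fun d g hg => by
  rw [← map_eq_self_of_forall_mem ψ hN d, ← Subgroup.map_commutator]
  exact Subgroup.mem_map_of_mem _ hg

def restrictAction (H : Subgroup Γ) (hH : ∀ d, ∀ h ∈ H, ψ d h ∈ H) : Δ →* MulAut H where
  toFun d := ((ψ d).subgroupMap H).trans
    (MulEquiv.subgroupCongr (map_eq_self_of_forall_mem ψ hH d))
  map_one' := by ext h; show ψ 1 h = h; simp
  map_mul' d e := by ext h; show ψ (d * e) h = ψ d (ψ e h); simp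

def quotientAction (N : Subgroup Γ) [N.Normal] (hN : ∀ d, ∀ g ∈ N, ψ d g ∈ N) :
    Δ →* MulAut (Γ ⧸ N) where
  toFun d := QuotientGroup.congr N N (ψ d) (map_eq_self_of_forall_mem ψ hN d)
  map_one' := by
    ext q
    induction q using QuotientGroup.induction_on with
    | H g => exact congrArg _ (show ψ 1 g = g by simp)
  map_mul' d e := by
    ext q
    induction q using QuotientGroup.induction_on with
    | H g => exact congrArg _ (show ψ (d * e) g = ψ d (ψ e g) by simp)

@[simp]
theorem quotientAction_apply_mk (N : Subgroup Γ) [N.Normal] (hN : ∀ d, ∀ g ∈ N, ψ d g ∈ N)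
    (d : Δ) (g : Γ) : quotientAction ψ N hN d g = (ψ d g : Γ ⧸ N) :=
  rfl

end Action

section FixedPoints

variable {Δ Γ : Type*} [Group Δ] [Group Γ] [Finite Δ] (ψ : Δ →* MulAut Γ)

open scoped IsMulCommutative in
theorem exists_fixed_inv_mul_mem_of_isMulCommutative (N : Subgroup Γ) [IsMulCommutative N]
    (hN : ∀ d, ∀ g ∈ N, ψ d g ∈ N) (hcop : (Nat.card N).Coprime (Nat.card Δ)) (x : Γ)
    (hx : ∀ d, x⁻¹ * ψ d x ∈ N) : ∃ c, (∀ d, ψ d c = c) ∧ x⁻¹ * c ∈ N := by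
  let _ := MulDistribMulAction.compHom N (restrictAction ψ N hN)
  have hsmul (d : Δ) (n : N) : ((d • n : N) : Γ) = ψ d n := rfl
  let f (d : Δ) : N := ⟨x⁻¹ * ψ d x, hx d⟩
  have hf : groupCohomology.IsMulCocycle₁ f := fun d e => by
    rw [mul_comm]
    exact Subtype.ext <| by simp [f, hsmul, mul_assoc]
  obtain ⟨m, hm⟩ := groupCohomology.isMulCoboundary₁_of_isMulCocycle₁_of_coprime hcop hf
  refine ⟨x * (m : Γ)⁻¹, fun d => ?_, by simp⟩
  have hxd : ψ d x = x * ((m : Γ)⁻¹ * ψ d m) := by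
    have := congrArg Subtype.val ((div_eq_inv_mul _ _).symm.trans (hm d))
    simp only [Subgroup.coe_mul, Subgroup.coe_inv, hsmul, f] at this
    rw [this]
    group
  rw [map_mul, map_inv, hxd]
  group

theorem exists_inv_mul_mem_commutator_of_coprime (N : Subgroup Γ) [N.Normal]
    (hN : ∀ d, ∀ g ∈ N, ψ d g ∈ N) (hcop : (Nat.card N).Coprime (Nat.card Δ)) (x : Γ)
    (hx : ∀ d, x⁻¹ * ψ d x ∈ N) : ∃ y, x⁻¹ * y ∈ N ∧ ∀ d, y⁻¹ * ψ d y ∈ ⁅N, N⁆ := by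
  set π := QuotientGroup.mk' ⁅N, N⁆
  have : IsMulCommutative (N.map π) := Subgroup.commutator_self_eq_bot_iff.mp <| by
    rw [← Subgroup.map_commutator, QuotientGroup.map_mk'_self]
  obtain ⟨c, hc, hxc⟩ := exists_fixed_inv_mul_mem_of_isMulCommutative
    (quotientAction ψ _ (forall_apply_mem_commutator ψ hN)) (N.map π)
    (by rintro d _ ⟨g, hg, rfl⟩; exact ⟨ψ d g, hN d g hg, rfl⟩)
    (hcop.coprime_dvd_left (Subgroup.card_map_dvd N π)) (π x) fun d => ⟨_, hx d, by simp [π]⟩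
  obtain ⟨y, rfl⟩ := QuotientGroup.mk_surjective c
  refine ⟨y, ?_, fun d => QuotientGroup.eq.mp (hc d).symm⟩
  have : x⁻¹ * y ∈ (N.map π).comap π := by
    rw [Subgroup.mem_comap, map_mul, map_inv]
    exact hxc
  rwa [Subgroup.comap_map_eq, QuotientGroup.ker_mk',
    sup_eq_left.mpr (Subgroup.commutator_le_right N N)] at this

theorem exists_fixed_inv_mul_mem_of_coprime [Finite Γ] (N : Subgroup Γ) [hN_normal : N.Normal]
    [hN_solv : Group.IsSolvable N] (hN : ∀ d, ∀ g ∈ N, ψ d g ∈ N)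
    (hcop : (Nat.card N).Coprime (Nat.card Δ)) (x : Γ) (hx : ∀ d, x⁻¹ * ψ d x ∈ N) :
    ∃ c, (∀ d, ψ d c = c) ∧ x⁻¹ * c ∈ N := by
  induction N using WellFoundedLT.induction generalizing x hN_normal hN_solv with
  | ind N ih =>
  rcases eq_or_ne N ⊥ with rfl | hbot
  · exact ⟨x, fun d => (inv_mul_eq_one.mp (Subgroup.mem_bot.mp (hx d))).symm, by simp⟩
  obtain ⟨y, hxy, hy⟩ := exists_inv_mul_mem_commutator_of_coprime ψ N hN hcop x hx
  have hle := Subgroup.commutator_le_right N N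
  have : Group.IsSolvable ↥⁅N, N⁆ :=
    Group.isSolvable_of_isSolvable_injective (Subgroup.inclusion_injective hle)
  obtain ⟨c, hc, hyc⟩ := ih _ (Subgroup.commutator_lt_self_of_isSolvable hbot)
    (forall_apply_mem_commutator ψ hN) (hcop.coprime_dvd_left (Subgroup.card_dvd_of_le hle)) y hy
  exact ⟨c, hc, by simpa [mul_assoc] using mul_mem hxy (hle hyc)⟩

end FixedPoints

section ActCommutator

variable {Δ Γ : Type*} [Group Δ] [Group Γ] (ψ : Δ →* MulAut Γ)

theorem actCommutator_mono_s5 {H H' : Subgroup Γ} {B B' : Subgroup Δ} (hH : H ≤ H') (hB : B ≤ B') :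
    actCommutator ψ H B ≤ actCommutator ψ H' B' :=
  Subgroup.closure_mono fun _ ⟨h, hh, b, hb, hg⟩ => ⟨h, hH hh, b, hB hb, hg⟩

theorem inv_mul_mem_actCommutator (g : Γ) (d : Δ) : g⁻¹ * ψ d g ∈ actCommutator ψ ⊤ ⊤ :=
  Subgroup.subset_closure ⟨g, trivial, d, trivial, rfl⟩

theorem actCommutator_le_comap (σ : Γ →* Γ)
    (hσ : ∀ g d, σ (g⁻¹ * ψ d g) ∈ actCommutator ψ ⊤ ⊤) :
    actCommutator ψ ⊤ ⊤ ≤ (actCommutator ψ ⊤ ⊤).comap σ :=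
  Subgroup.closure_le _ |>.mpr <| by rintro _ ⟨g, -, d, -, rfl⟩; exact hσ g d

instance actCommutator_normal : (actCommutator ψ ⊤ ⊤).Normal where
  conj_mem n hn g := by
    refine actCommutator_le_comap ψ (MulAut.conj g).toMonoidHom (fun h d => ?_) hn
    have : g * (h⁻¹ * ψ d h) * g⁻¹ = (h * g⁻¹)⁻¹ * ψ d (h * g⁻¹) * (g * ψ d g⁻¹)⁻¹ := by
      simp only [map_mul, map_inv]
      group
    simpa [this] using mul_mem (inv_mul_mem_actCommutator ψ (h * g⁻¹) d)
      (inv_mem (inv_mul_mem_actCommutator ψ g⁻¹ d))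

theorem apply_mem_actCommutator (d : Δ) :
    ∀ g ∈ actCommutator ψ ⊤ ⊤, ψ d g ∈ actCommutator ψ ⊤ ⊤ := by
  refine actCommutator_le_comap ψ (ψ d).toMonoidHom fun h e => ?_
  have : ψ d (h⁻¹ * ψ e h) = (ψ d h)⁻¹ * ψ (d * e * d⁻¹) (ψ d h) := by simp
  simpa [this] using inv_mul_mem_actCommutator ψ (ψ d h) (d * e * d⁻¹)

end ActCommutator

theorem map_actCommutator_restrictAction {A G : Type*} [Group A] [Group G] (φ : A →* MulAut G)
    (B : Subgroup A) (H : Subgroup G) (hH : ∀ b : B, ∀ h ∈ H, φ b h ∈ H) :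
    (actCommutator (restrictAction (φ.comp B.subtype) H hH) ⊤ ⊤).map H.subtype =
      actCommutator φ H B := by
  rw [actCommutator, actCommutator, MonoidHom.map_closure]
  congr 1
  ext g
  constructor
  · rintro ⟨_, ⟨h, -, b, -, rfl⟩, rfl⟩
    exact ⟨h, h.2, b, b.2, rfl⟩
  · rintro ⟨h, hh, b, hb, rfl⟩
    exact ⟨_, ⟨⟨h, hh⟩, trivial, ⟨b, hb⟩, trivial, rfl⟩, rfl⟩

theorem card_dvd_index_map_inl {A G : Type*} [Group A] [Group G] (φ : A →* MulAut G)
    (N : Subgroup G) : Nat.card A ∣ (N.map (SemidirectProduct.inl : G →* G ⋊[φ] A)).index := by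
  rw [N.index_map_of_injective SemidirectProduct.inl_injective,
    SemidirectProduct.range_inl_eq_ker_rightHom, Subgroup.index_ker,
    MonoidHom.range_eq_top.mpr SemidirectProduct.rightHom_surjective, Subgroup.card_top]
  exact dvd_mul_left _ _

theorem good_action_of_coprime_commutator_general {A G : Type*} [Group A] [Group G] [Finite A] [Finite G]
    [Group.IsSolvable G] (φ : A →* MulAut G)
    (hcop : Nat.Coprime (Nat.card ↥(actCommutator φ ⊤ ⊤))
      (((actCommutator φ ⊤ ⊤).map (SemidirectProduct.inl : G →* G ⋊[φ] A)).index)) :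
    IsGoodAction φ := by
  intro B H hH
  set ψ := restrictAction (φ.comp B.subtype) H fun b => hH b b.2
  have hmap : (actCommutator ψ ⊤ ⊤).map H.subtype = actCommutator φ H B :=
    map_actCommutator_restrictAction φ B H _
  have hcopB : (Nat.card (actCommutator ψ ⊤ ⊤)).Coprime (Nat.card B) := by
    refine Nat.Coprime.coprime_dvd_left ?_ <| hcop.coprime_dvd_right <|
      (Subgroup.card_subgroup_dvd_card B).trans (card_dvd_index_map_inl φ _)
    rw [← Subgroup.card_map_of_injective H.subtype_injective, hmap]
    exact Subgroup.card_dvd_of_le (actCommutator_mono_s5 φ le_top le_top)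
  refine subset_antisymm (fun x hx => ?_) ?_
  · obtain ⟨c, hc, hxc⟩ := exists_fixed_inv_mul_mem_of_coprime ψ _ (apply_mem_actCommutator ψ)
      hcopB ⟨x, hx⟩ (inv_mul_mem_actCommutator ψ _)
    refine ⟨x * c⁻¹, ?_, c, ⟨c.2, fun b hb => congrArg Subtype.val (hc ⟨b, hb⟩)⟩,
      inv_mul_cancel_right x c⟩
    rw [← hmap]
    exact ⟨_, inv_mem ((actCommutator_normal ψ).mem_comm hxc), by simp⟩
  · rintro _ ⟨n, hn, c, hc, rfl⟩
    exact H.mul_mem (Subgroup.map_subtype_le _ (hmap ▸ hn)) hc.1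

/-- Let `G` and `A` be finite solvable groups, `A` acting on `G` via `φ`, and
form the semidirect product `GA = G ⋊[φ] A`.  If `gcd(|[G,A]|, |GA/[G,A]|) = 1`
(where `|GA/[G,A]|` is the index of `[G,A]` in `GA`), then the action of `A` on `G` is good. -/
theorem good_action_of_coprime_commutator {A G : Type*} [Group A] [Group G] [Finite A] [Finite G]
    [Group.IsSolvable G] [Group.IsSolvable A] (φ : A →* MulAut G)
    (hcop : Nat.Coprime (Nat.card ↥(actCommutator φ ⊤ ⊤))
      (((actCommutator φ ⊤ ⊤).map (SemidirectProduct.inl : G →* G ⋊[φ] A)).index)) :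
    IsGoodAction φ :=
  good_action_of_coprime_commutator_general φ hcop
end
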